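/- For the two-site model with the redefined second output ĥ_h(x) := x_h3, define on X₊ the coordinate functions ξ_e := (h_e, L_f h_e, L_f² h_e, L_f³ h_e, L_f⁴ h_e), ξ̂_h := (ĥ_h, L_f ĥ_h, L_f² ĥ_h), η̂ := (x_g3, x_e1, x_e2, x_h1, x_h2), and the map r̂ := (f_g3, f_e1, f_e2, f_h1, f_h2). Then for any two points x, x' ∈ X₊ that agree in all coordinates except possibly the coordinate x_h3, one has ξ_e(x) = ξ_e(x'), ξ̂_h2(x) = ξ̂_h2(x'), ξ̂_h3(x) = ξ̂_h3(x'), η̂(x) = η̂(x'), and r̂(x) = r̂(x'), while ξ̂_h1(x) − ξ̂_h1(x') = x_h3 − x_h3'. (This is the content of Lemma 5: the internal dynamics q̂ = r̂ ∘ Φ̂⁻¹ of the two-site model under the redefined output are independent of the variable ξ̂_h1 = x_h3.) -/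

import Mathlib

noncomputable section

/-- Parameters of the two-site electricity and heat supply model, together
with the sign conditions assumed in the paper. -/
structure Params where
  (Tv1 Tf1 TCD1 Tv2 Tf2 TCD2 : ℝ)
  (Te1 Te2 D1 D2 : ℝ)
  (Ke1 Ke2 Kh1 Kh2 : ℝ)
  (Th1 Th2 Th3 : ℝ)
  (rhos lam len dia hc : ℝ)
  (E1 E2 Einf : ℝ)
  (B10 B20 B12 : ℝ)
  (G10 G20 G12 : ℝ)
  (beta1 beta2 : ℝ)
  (Wo1 Wo2 : ℝ)
  (QL1 QL2 : ℝ)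
  hTv1 : 0 < Tv1
  hTf1 : 0 < Tf1
  hTCD1 : 0 < TCD1
  hTv2 : 0 < Tv2
  hTf2 : 0 < Tf2
  hTCD2 : 0 < TCD2
  hTe1 : 0 < Te1
  hTe2 : 0 < Te2
  hD1 : 0 < D1
  hD2 : 0 < D2
  hKe1 : 0 < Ke1
  hKe2 : 0 < Ke2
  hKh1 : 0 < Kh1
  hKh2 : 0 < Kh2
  hTh1 : 0 < Th1
  hTh2 : 0 < Th2
  hTh3 : 0 < Th3
  hrhos : 0 < rhos
  hlam : 0 < lam
  hlen : 0 < len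
  hdia : 0 < dia
  hhc : 0 < hc
  hE1 : 0 < E1
  hE2 : 0 < E2
  hEinf : 0 < Einf
  hB10 : 0 < B10
  hB20 : 0 < B20
  hB12 : 0 < B12
  hG10 : 0 ≤ G10
  hG20 : 0 ≤ G20
  hG12 : 0 ≤ G12
  hbeta1 : 0 ≤ beta1
  hbeta2 : 0 ≤ beta2
  hWo1 : Wo1 ∈ Set.Ioo (0 : ℝ) 1
  hWo2 : Wo2 ∈ Set.Ioo (0 : ℝ) 1

/-- The state space of the two-site model: `x = (x_g1,…,x_g6, x_e1,…,x_e4,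
x_h1, x_h2, x_h3) ∈ ℝ¹³`.  Index convention: `x i` for `i = 0,…,5` are the gas
turbine variables `x_g1,…,x_g6`; `x 6, x 7, x 8, x 9` are `x_e1, x_e2, x_e3,
x_e4`; `x 10, x 11, x 12` are `x_h1, x_h2, x_h3`. -/
abbrev St : Type := Fin 13 → ℝ

namespace Params

variable (p : Params)

/-- `c = (π/4)·h_c·ρ_s`. -/
def cc : ℝ := (Real.pi / 4) * p.hc * p.rhos

/-- Mechanical power of turbine 1. -/
def Pm1 (x : St) : ℝ := p.Ke1 * (x 2 - p.Wo1) / (1 - p.Wo1)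

/-- Mechanical power of turbine 2. -/
def Pm2 (x : St) : ℝ := p.Ke2 * (x 5 - p.Wo2) / (1 - p.Wo2)

/-- Electric output power of generator 1. -/
def Pe1 (x : St) : ℝ :=
  p.E1 * p.Einf * (p.G10 * Real.cos (x 6) + p.B10 * Real.sin (x 6))
    + p.E1 * p.E2 * (p.G12 * Real.cos (x 6 - x 8) + p.B12 * Real.sin (x 6 - x 8))

/-- Electric output power of generator 2. -/
def Pe2 (x : St) : ℝ :=
  p.E2 * p.Einf * (p.G20 * Real.cos (x 8) + p.B20 * Real.sin (x 8))
    + p.E2 * p.E1 * (p.G12 * Real.cos (x 8 - x 6) + p.B12 * Real.sin (x 8 - x 6))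

/-- Heat output of recovery boiler 1. -/
def Qa1 (x : St) : ℝ := p.Kh1 * (x 1 + p.beta1) / (1 + p.beta1)

/-- Heat output of recovery boiler 2. -/
def Qa2 (x : St) : ℝ := p.Kh2 * (x 4 + p.beta2) / (1 + p.beta2)

/-- The drift vector field `f` of the two-site model. -/
def drift (x : St) : St :=
  ![ (-x 0 + p.Wo1) / p.Tv1,
     (-x 1 + x 0) / p.Tf1,
     (-x 2 + x 1) / p.TCD1,
     (-x 3 + p.Wo2) / p.Tv2,
     (-x 4 + x 3) / p.Tf2,
     (-x 5 + x 4) / p.TCD2,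
     x 7 / p.Te1,
     (p.Pm1 x - p.D1 * x 7 - p.Pe1 x) / p.Te1,
     x 9 / p.Te2,
     (p.Pm2 x - p.D2 * x 9 - p.Pe2 x) / p.Te2,
     (p.Qa1 x - p.QL1 - p.cc * x 11) / p.Th1
       - (p.Qa2 x - p.QL2 + p.cc * x 11) / p.Th2,
     (x 10 / p.rhos - (p.lam * p.len / (2 * p.dia)) * x 11 * |x 11|) / p.Th3,
     p.Qa1 x - p.QL1 + p.Qa2 x - p.QL2 ]

/-- The input vector field `g_1`. -/
def g1 : St → St := fun _ => Pi.single 0 ((1 - p.Wo1) / p.Tv1)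

/-- The input vector field `g_2`. -/
def g2 : St → St := fun _ => Pi.single 3 ((1 - p.Wo2) / p.Tv2)

/-- The output `h_e`: electric power to the infinite bus. -/
def hE (x : St) : ℝ :=
  p.E1 * p.Einf * (p.B10 * Real.sin (x 6) - p.G10 * Real.cos (x 6))
    + p.E2 * p.Einf * (p.B20 * Real.sin (x 8) - p.G20 * Real.cos (x 8))

/-- The output `h_h`: heat flow rate through the pipe. -/
def hH (x : St) : ℝ := p.cc * x 11

end Params

/-- Lie derivative `L_v h (x) = Dh(x)·v(x)` of a function along a vector
field. -/
def lie (v : St → St) (h : St → ℝ) (x : St) : ℝ := fderiv ℝ h x (v x)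

/-- Iterated Lie derivative `L_v^k h`. -/
def lieIt (v : St → St) : ℕ → (St → ℝ) → (St → ℝ)
  | 0, h => h
  | n + 1, h => lie v (lieIt v n h)

/-- The open set `X₊ = { x : x_h2 > 0 }` on which the drift is smooth. -/
def Xplus : Set St := { x : St | 0 < x 11 }

/-- The redefined heat output `ĥ_h(x) := x_h3` (weighted average boiler
pressure). -/
def hHhat : St → ℝ := fun x => x 12

namespace TwoSiteAux

attribute [local fun_prop] Real.contDiff_sin Real.contDiff_cos

/-- Projection killing coordinates 10, 11, 12 (as a linear map). -/
def Plin : St →ₗ[ℝ] St where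
  toFun x i := if (i : ℕ) ≤ 9 then x i else 0
  map_add' x y := by funext i; by_cases h : (i : ℕ) ≤ 9 <;> simp [h]
  map_smul' c x := by funext i; by_cases h : (i : ℕ) ≤ 9 <;> simp [h]

set_option maxHeartbeats 1000000 in
/-- Projection killing coordinates 10, 11, 12. -/
def P : St →L[ℝ] St := { Plin with cont := Plin.continuous_of_finiteDimensional }

lemma Pa0 (x : St) : P x 0 = x 0 := rfl
lemma Pa1 (x : St) : P x 1 = x 1 := rfl
lemma Pa2 (x : St) : P x 2 = x 2 := rfl
lemma Pa3 (x : St) : P x 3 = x 3 := rfl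
lemma Pa4 (x : St) : P x 4 = x 4 := rfl
lemma Pa5 (x : St) : P x 5 = x 5 := rfl
lemma Pa6 (x : St) : P x 6 = x 6 := rfl
lemma Pa7 (x : St) : P x 7 = x 7 := rfl
lemma Pa8 (x : St) : P x 8 = x 8 := rfl
lemma Pa9 (x : St) : P x 9 = x 9 := rfl
lemma Pa10 (x : St) : P x 10 = 0 := rfl
lemma Pa11 (x : St) : P x 11 = 0 := rfl
lemma Pa12 (x : St) : P x 12 = 0 := rfl

lemma da0 (p : Params) (y : St) : p.drift y 0 = (-y 0 + p.Wo1) / p.Tv1 := rfl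
lemma da1 (p : Params) (y : St) : p.drift y 1 = (-y 1 + y 0) / p.Tf1 := rfl
lemma da2 (p : Params) (y : St) : p.drift y 2 = (-y 2 + y 1) / p.TCD1 := rfl
lemma da3 (p : Params) (y : St) : p.drift y 3 = (-y 3 + p.Wo2) / p.Tv2 := rfl
lemma da4 (p : Params) (y : St) : p.drift y 4 = (-y 4 + y 3) / p.Tf2 := rfl
lemma da5 (p : Params) (y : St) : p.drift y 5 = (-y 5 + y 4) / p.TCD2 := rfl
lemma da6 (p : Params) (y : St) : p.drift y 6 = y 7 / p.Te1 := rfl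
lemma da7 (p : Params) (y : St) : p.drift y 7 =
    (p.Ke1 * (y 2 - p.Wo1) / (1 - p.Wo1) - p.D1 * y 7 -
      (p.E1 * p.Einf * (p.G10 * Real.cos (y 6) + p.B10 * Real.sin (y 6)) +
        p.E1 * p.E2 * (p.G12 * Real.cos (y 6 - y 8) + p.B12 * Real.sin (y 6 - y 8)))) /
      p.Te1 := rfl
lemma da8 (p : Params) (y : St) : p.drift y 8 = y 9 / p.Te2 := rfl
lemma da9 (p : Params) (y : St) : p.drift y 9 =
    (p.Ke2 * (y 5 - p.Wo2) / (1 - p.Wo2) - p.D2 * y 9 -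
      (p.E2 * p.Einf * (p.G20 * Real.cos (y 8) + p.B20 * Real.sin (y 8)) +
        p.E2 * p.E1 * (p.G12 * Real.cos (y 8 - y 6) + p.B12 * Real.sin (y 8 - y 6)))) /
      p.Te2 := rfl
lemma da10 (p : Params) (y : St) : p.drift y 10 =
    (p.Kh1 * (y 1 + p.beta1) / (1 + p.beta1) - p.QL1 - p.cc * y 11) / p.Th1 -
      (p.Kh2 * (y 4 + p.beta2) / (1 + p.beta2) - p.QL2 + p.cc * y 11) / p.Th2 := rfl
lemma da11 (p : Params) (y : St) : p.drift y 11 =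
    (y 10 / p.rhos - p.lam * p.len / (2 * p.dia) * y 11 * |y 11|) / p.Th3 := rfl
lemma da12 (p : Params) (y : St) : p.drift y 12 =
    p.Kh1 * (y 1 + p.beta1) / (1 + p.beta1) - p.QL1 +
      p.Kh2 * (y 4 + p.beta2) / (1 + p.beta2) - p.QL2 := rfl

lemma P_idem (x : St) : P (P x) = P x := by
  funext i; fin_cases i
  · show P (P x) 0 = P x 0; simp only [Pa0]
  · show P (P x) 1 = P x 1; simp only [Pa1]
  · show P (P x) 2 = P x 2; simp only [Pa2]
  · show P (P x) 3 = P x 3; simp only [Pa3]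
  · show P (P x) 4 = P x 4; simp only [Pa4]
  · show P (P x) 5 = P x 5; simp only [Pa5]
  · show P (P x) 6 = P x 6; simp only [Pa6]
  · show P (P x) 7 = P x 7; simp only [Pa7]
  · show P (P x) 8 = P x 8; simp only [Pa8]
  · show P (P x) 9 = P x 9; simp only [Pa9]
  · show P (P x) 10 = P x 10; simp only [Pa10]
  · show P (P x) 11 = P x 11; simp only [Pa11]
  · show P (P x) 12 = P x 12; simp only [Pa12]

/-- A "good" function: smooth and independent of the coordinates killed by `P`. -/
structure Good (h : St → ℝ) : Prop where
  smooth : ContDiff ℝ (⊤ : ℕ∞) h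
  inv : ∀ x, h (P x) = h x

lemma Good.eq_of_P_eq {h : St → ℝ} (hg : Good h) {x x' : St} (hP : P x = P x') :
    h x = h x' := by
  rw [← hg.inv x, hP, hg.inv]

/-- The truncated drift is smooth on all of `ℝ¹³`. -/
lemma contDiff_Pdrift (p : Params) : ContDiff ℝ (⊤ : ℕ∞) (fun y : St => P (p.drift y)) := by
  have h1 := p.hTv1.ne'; have h2 := p.hTf1.ne'; have h3 := p.hTCD1.ne'
  have h4 := p.hTv2.ne'; have h5 := p.hTf2.ne'; have h6 := p.hTCD2.ne'
  have h7 := p.hTe1.ne'; have h8 := p.hTe2.ne'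
  have h9 : (1 : ℝ) - p.Wo1 ≠ 0 := by have := p.hWo1.2; intro h; linarith
  have h10 : (1 : ℝ) - p.Wo2 ≠ 0 := by have := p.hWo2.2; intro h; linarith
  rw [contDiff_pi]
  intro i
  fin_cases i
  · show ContDiff ℝ (⊤ : ℕ∞) fun y : St => (-y 0 + p.Wo1) / p.Tv1
    fun_prop (disch := intros; assumption)
  · show ContDiff ℝ (⊤ : ℕ∞) fun y : St => (-y 1 + y 0) / p.Tf1
    fun_prop (disch := intros; assumption)
  · show ContDiff ℝ (⊤ : ℕ∞) fun y : St => (-y 2 + y 1) / p.TCD1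
    fun_prop (disch := intros; assumption)
  · show ContDiff ℝ (⊤ : ℕ∞) fun y : St => (-y 3 + p.Wo2) / p.Tv2
    fun_prop (disch := intros; assumption)
  · show ContDiff ℝ (⊤ : ℕ∞) fun y : St => (-y 4 + y 3) / p.Tf2
    fun_prop (disch := intros; assumption)
  · show ContDiff ℝ (⊤ : ℕ∞) fun y : St => (-y 5 + y 4) / p.TCD2
    fun_prop (disch := intros; assumption)
  · show ContDiff ℝ (⊤ : ℕ∞) fun y : St => y 7 / p.Te1
    fun_prop (disch := intros; assumption)
  · show ContDiff ℝ (⊤ : ℕ∞) fun y : St =>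
      (p.Ke1 * (y 2 - p.Wo1) / (1 - p.Wo1) - p.D1 * y 7 -
        (p.E1 * p.Einf * (p.G10 * Real.cos (y 6) + p.B10 * Real.sin (y 6)) +
          p.E1 * p.E2 * (p.G12 * Real.cos (y 6 - y 8) + p.B12 * Real.sin (y 6 - y 8)))) / p.Te1
    fun_prop (disch := intros; assumption)
  · show ContDiff ℝ (⊤ : ℕ∞) fun y : St => y 9 / p.Te2
    fun_prop (disch := intros; assumption)
  · show ContDiff ℝ (⊤ : ℕ∞) fun y : St =>
      (p.Ke2 * (y 5 - p.Wo2) / (1 - p.Wo2) - p.D2 * y 9 -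
        (p.E2 * p.Einf * (p.G20 * Real.cos (y 8) + p.B20 * Real.sin (y 8)) +
          p.E2 * p.E1 * (p.G12 * Real.cos (y 8 - y 6) + p.B12 * Real.sin (y 8 - y 6)))) / p.Te2
    fun_prop (disch := intros; assumption)
  · show ContDiff ℝ (⊤ : ℕ∞) fun _ : St => (0 : ℝ)
    exact contDiff_const
  · show ContDiff ℝ (⊤ : ℕ∞) fun _ : St => (0 : ℝ)
    exact contDiff_const
  · show ContDiff ℝ (⊤ : ℕ∞) fun _ : St => (0 : ℝ)
    exact contDiff_const

lemma Pdrift_P (p : Params) (y : St) : P (p.drift (P y)) = P (p.drift y) := by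
  funext i; fin_cases i
  · show P (p.drift (P y)) 0 = P (p.drift y) 0
    simp only [Pa0, da0]
  · show P (p.drift (P y)) 1 = P (p.drift y) 1
    simp only [Pa1, da1, Pa0]
  · show P (p.drift (P y)) 2 = P (p.drift y) 2
    simp only [Pa2, da2, Pa1]
  · show P (p.drift (P y)) 3 = P (p.drift y) 3
    simp only [Pa3, da3]
  · show P (p.drift (P y)) 4 = P (p.drift y) 4
    simp only [Pa4, da4, Pa3]
  · show P (p.drift (P y)) 5 = P (p.drift y) 5
    simp only [Pa5, da5, Pa4]
  · show P (p.drift (P y)) 6 = P (p.drift y) 6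
    simp only [Pa6, da6, Pa7]
  · show P (p.drift (P y)) 7 = P (p.drift y) 7
    simp only [Pa7, da7, Pa2, Pa6, Pa8]
  · show P (p.drift (P y)) 8 = P (p.drift y) 8
    simp only [Pa8, da8, Pa9]
  · show P (p.drift (P y)) 9 = P (p.drift y) 9
    simp only [Pa9, da9, Pa5, Pa6, Pa8]
  · show P (p.drift (P y)) 10 = P (p.drift y) 10
    simp only [Pa10]
  · show P (p.drift (P y)) 11 = P (p.drift y) 11
    simp only [Pa11]
  · show P (p.drift (P y)) 12 = P (p.drift y) 12
    simp only [Pa12]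

lemma good_lie (p : Params) {h : St → ℝ} (hg : Good h) : Good (lie p.drift h) := by
  have hdiff : Differentiable ℝ h := hg.smooth.differentiable (by simp)
  have hfd : ∀ y : St, fderiv ℝ h y = (fderiv ℝ h (P y)).comp P := by
    intro y
    have hcomp : h = h ∘ ⇑P := by funext z; exact (hg.inv z).symm
    conv_lhs => rw [hcomp]
    rw [fderiv_comp y (hdiff (P y)) P.differentiable.differentiableAt,
      ContinuousLinearMap.fderiv]
  have key : lie p.drift h = (fun z => fderiv ℝ h z (P (p.drift z))) ∘ ⇑P := by
    funext y
    show fderiv ℝ h y (p.drift y) = fderiv ℝ h (P y) (P (p.drift (P y)))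
    rw [Pdrift_P, hfd y, ContinuousLinearMap.comp_apply]
  have hGsmooth : ContDiff ℝ (⊤ : ℕ∞) (fun z => fderiv ℝ h z (P (p.drift z))) :=
    (hg.smooth.fderiv_right (mod_cast le_top)).clm_apply (contDiff_Pdrift p)
  refine ⟨?_, ?_⟩
  · rw [key]; exact hGsmooth.comp P.contDiff
  · intro y; rw [key]
    show (fun z => fderiv ℝ h z (P (p.drift z))) (P (P y)) =
      (fun z => fderiv ℝ h z (P (p.drift z))) (P y)
    rw [P_idem]

lemma good_hE (p : Params) : Good p.hE := by
  constructor
  · unfold Params.hE; fun_prop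
  · intro y
    show p.E1 * p.Einf * (p.B10 * Real.sin (P y 6) - p.G10 * Real.cos (P y 6)) +
        p.E2 * p.Einf * (p.B20 * Real.sin (P y 8) - p.G20 * Real.cos (P y 8)) = _
    rw [Pa6, Pa8]
    rfl

lemma good_lieIt_hE (p : Params) (k : ℕ) : Good (lieIt p.drift k p.hE) := by
  induction k with
  | zero => exact good_hE p
  | succ n ih => exact good_lie p ih

/-- Coordinate 12 as a continuous linear map. -/
def Q : St →L[ℝ] ℝ :=
  { toFun := fun x => x 12
    map_add' := fun _ _ => rfl
    map_smul' := fun _ _ => rfl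
    cont := continuous_apply 12 }

lemma lie_hHhat (p : Params) :
    lieIt p.drift 1 hHhat = fun y => p.drift y 12 := by
  funext y
  show fderiv ℝ hHhat y (p.drift y) = p.drift y 12
  rw [show hHhat = ⇑Q from rfl, ContinuousLinearMap.fderiv]
  rfl

lemma good_drift12 (p : Params) : Good (fun y : St => p.drift y 12) := by
  have hb1 : (1 : ℝ) + p.beta1 ≠ 0 := by have := p.hbeta1; intro h; linarith
  have hb2 : (1 : ℝ) + p.beta2 ≠ 0 := by have := p.hbeta2; intro h; linarith
  constructor
  · show ContDiff ℝ (⊤ : ℕ∞) fun y : St =>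
      p.Kh1 * (y 1 + p.beta1) / (1 + p.beta1) - p.QL1
        + p.Kh2 * (y 4 + p.beta2) / (1 + p.beta2) - p.QL2
    fun_prop (disch := intros; assumption)
  · intro y
    simp only [da12, Pa1, Pa4]

end TwoSiteAux

open TwoSiteAux

/-- Lemma 5 of the paper. In the coordinates adapted to the
redefined output, the functions `ξ_e = (h_e, …, L_f⁴ h_e)`,
`ξ̂_h2 = L_f ĥ_h`, `ξ̂_h3 = L_f² ĥ_h`, `η̂ = (x_g3, x_e1, x_e2, x_h1, x_h2)`
and `r̂ = (f_g3, f_e1, f_e2, f_h1, f_h2)` take equal values at any two points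
of `X₊` agreeing in all coordinates except possibly `x_h3` (index `12`), while
`ξ̂_h1 = ĥ_h` differs exactly by `x_h3 − x_h3'`.  Hence the internal dynamics
`q̂ = r̂ ∘ Φ̂⁻¹` are independent of `ξ̂_h1 = x_h3`. -/
theorem two_site_internal_dynamics_independent_of_xh3 (p : Params)
    (x x' : St) (hx : x ∈ Xplus) (hx' : x' ∈ Xplus)
    (hagree : ∀ i : Fin 13, i ≠ 12 → x i = x' i) :
    (∀ k ≤ 4, lieIt p.drift k p.hE x = lieIt p.drift k p.hE x') ∧
    (lieIt p.drift 1 hHhat x = lieIt p.drift 1 hHhat x') ∧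
    (lieIt p.drift 2 hHhat x = lieIt p.drift 2 hHhat x') ∧
    (x 2 = x' 2 ∧ x 6 = x' 6 ∧ x 7 = x' 7 ∧ x 10 = x' 10 ∧ x 11 = x' 11) ∧
    (p.drift x 2 = p.drift x' 2 ∧ p.drift x 6 = p.drift x' 6 ∧
     p.drift x 7 = p.drift x' 7 ∧ p.drift x 10 = p.drift x' 10 ∧
     p.drift x 11 = p.drift x' 11) ∧
    (hHhat x - hHhat x' = x 12 - x' 12) := by
  have h0 := hagree 0 (by decide)
  have h1 := hagree 1 (by decide)
  have h2 := hagree 2 (by decide)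
  have h3 := hagree 3 (by decide)
  have h4 := hagree 4 (by decide)
  have h5 := hagree 5 (by decide)
  have h6 := hagree 6 (by decide)
  have h7 := hagree 7 (by decide)
  have h8 := hagree 8 (by decide)
  have h9 := hagree 9 (by decide)
  have h10 := hagree 10 (by decide)
  have h11 := hagree 11 (by decide)
  have hP : P x = P x' := by
    funext i; fin_cases i
    · show P x 0 = P x' 0; rw [Pa0, Pa0, h0]
    · show P x 1 = P x' 1; rw [Pa1, Pa1, h1]
    · show P x 2 = P x' 2; rw [Pa2, Pa2, h2]
    · show P x 3 = P x' 3; rw [Pa3, Pa3, h3]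
    · show P x 4 = P x' 4; rw [Pa4, Pa4, h4]
    · show P x 5 = P x' 5; rw [Pa5, Pa5, h5]
    · show P x 6 = P x' 6; rw [Pa6, Pa6, h6]
    · show P x 7 = P x' 7; rw [Pa7, Pa7, h7]
    · show P x 8 = P x' 8; rw [Pa8, Pa8, h8]
    · show P x 9 = P x' 9; rw [Pa9, Pa9, h9]
    · show P x 10 = P x' 10; rw [Pa10, Pa10]
    · show P x 11 = P x' 11; rw [Pa11, Pa11]
    · show P x 12 = P x' 12; rw [Pa12, Pa12]
  refine ⟨fun k _ => (good_lieIt_hE p k).eq_of_P_eq hP, ?_, ?_, ⟨h2, h6, h7, h10, h11⟩,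
    ⟨?_, ?_, ?_, ?_, ?_⟩, rfl⟩
  · rw [lie_hHhat]
    exact (good_drift12 p).eq_of_P_eq hP
  · have e2 : lieIt p.drift 2 hHhat = lie p.drift (fun y => p.drift y 12) := by
      show lie p.drift (lieIt p.drift 1 hHhat) = _
      rw [lie_hHhat]
    rw [e2]
    exact (good_lie p (good_drift12 p)).eq_of_P_eq hP
  · rw [da2, da2, h1, h2]
  · rw [da6, da6, h7]
  · rw [da7, da7, h2, h6, h7, h8]
  · rw [da10, da10, h1, h4, h11]
  · rw [da11, da11, h10, h11]
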